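/- There exist four orthonormal bases B_0, B_1, B_2, B_3 of ℂ^3 that are pairwise mutually unbiased (|⟨e, f⟩| = 1/√3 for basis vectors e, f from distinct bases), together with a choice of one unit vector v_k from each basis B_k, such that the four vectors v_0, v_1, v_2, v_3 all lie in a common 2-dimensional complex linear subspace of ℂ^3 and satisfy |⟨v_k, v_l⟩| = 1/√3 for all k ≠ l. -/

import Mathlib

/-!
Over a finite field `F` of odd characteristic with a primitive additive character `ψ`, the
standard basis of `ℂ^F` together with the chirp bases `x ↦ ψ (a x² + b x) / √|F|`, one for each
`a : F`, are `|F| + 1` mutually unbiased bases (Ivanović, Wootters–Fields). Two chirps with the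
same `a` are orthogonal by character orthogonality; for `a ≠ a'` their inner product is a
quadratic Gauss sum `∑ₓ ψ (f x)` with `f x = c x² + d x`, `c ≠ 0`, whose squared modulus
collapses by Weil differencing: substituting `x = y + m` turns the double sum into
`∑ₘ ψ (f m) ∑_y ψ (2 c m y)`, and only `m = 0` survives, leaving `|F|`.

The chirps with `b = 0` and the first standard basis vector are even functions on `F`. For
`F = 𝔽₃` the even functions form the 2-dimensional span of `e₀` and `e₁ + e₂`, so these four
vectors lie on a common projective line, and they are pairwise unbiased because they come from
distinct bases.
-/

open scoped InnerProductSpace ComplexConjugate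
open Finset

noncomputable section

namespace AddChar

variable {F : Type*} [Field F] [Fintype F] [DecidableEq F] {ψ : AddChar F ℂ}

theorem norm_sum_quadratic_eq_sqrt_card (hψ : ψ.IsPrimitive) (h2 : (2 : F) ≠ 0) {a : F}
    (ha : a ≠ 0) (b : F) :
    ‖∑ x, ψ (a * x ^ 2 + b * x)‖ = √(Fintype.card F) := by
  set f : F → F := fun x ↦ a * x ^ 2 + b * x
  have hshift (y m : F) : f (y + m) - f y = f m + y * (2 * a * m) := by simp only [f]; ring
  have hmul_conj : (∑ x, ψ (f x)) * conj (∑ x, ψ (f x)) = Fintype.card F :=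
    calc (∑ x, ψ (f x)) * conj (∑ x, ψ (f x))
        = ∑ y, ∑ x, ψ (f x - f y) := by
          simp only [map_sum, ← map_neg_eq_conj, sum_mul_sum, sub_eq_add_neg, map_add_eq_mul]
          exact sum_comm
      _ = ∑ y, ∑ m, ψ (f (y + m) - f y) := by
          refine sum_congr rfl fun y _ ↦ ?_
          exact (Fintype.sum_equiv (Equiv.addLeft y) _ _ fun _ ↦ rfl).symm
      _ = ∑ m, ψ (f m) * ∑ y, ψ (y * (2 * a * m)) := by
          simp only [hshift, map_add_eq_mul, mul_sum]
          exact sum_comm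
      _ = ∑ m, ψ (f m) * if m = 0 then (Fintype.card F : ℂ) else 0 := by
          simp only [sum_mulShift _ hψ, mul_eq_zero, h2, ha, false_or, Nat.cast_ite, Nat.cast_zero]
      _ = Fintype.card F := by simp [f]
  rw [Complex.mul_conj'] at hmul_conj
  rw [← Real.sqrt_sq (norm_nonneg _)]
  exact congrArg Real.sqrt (by exact_mod_cast hmul_conj)

end AddChar

section Chirp

variable {R : Type*} [CommRing R] [Fintype R]

def chirp (ψ : AddChar R ℂ) (a b : R) : EuclideanSpace ℂ R :=
  WithLp.toLp 2 fun x ↦ (√(Fintype.card R) : ℂ)⁻¹ * ψ (a * x ^ 2 + b * x)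

variable {ψ : AddChar R ℂ}

lemma chirp_apply (a b x : R) :
    chirp ψ a b x = (√(Fintype.card R) : ℂ)⁻¹ * ψ (a * x ^ 2 + b * x) := rfl

lemma norm_chirp_apply (a b x : R) : ‖chirp ψ a b x‖ = 1 / √(Fintype.card R) := by
  simp [chirp_apply, AddChar.norm_apply]

lemma inner_chirp (a b a' b' : R) :
    ⟪chirp ψ a b, chirp ψ a' b'⟫_ℂ =
      (Fintype.card R : ℂ)⁻¹ * ∑ x, ψ ((a' - a) * x ^ 2 + (b' - b) * x) := by
  have hsq : (√(Fintype.card R) : ℂ)⁻¹ * (√(Fintype.card R) : ℂ)⁻¹ = (Fintype.card R : ℂ)⁻¹ := by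
    rw [← mul_inv, ← Complex.ofReal_mul, Real.mul_self_sqrt (Nat.cast_nonneg _)]; push_cast; rfl
  simp only [PiLp.inner_apply, RCLike.inner_apply, chirp_apply, map_mul, map_inv₀,
    Complex.conj_ofReal, ← AddChar.map_neg_eq_conj, mul_sum]
  refine sum_congr rfl fun x _ ↦ ?_
  rw [mul_mul_mul_comm, hsq, ← AddChar.map_add_eq_mul]
  congr 2
  ring

lemma chirp_zero_apply_neg (a x : R) : chirp ψ a 0 (-x) = chirp ψ a 0 x := by
  simp only [chirp_apply, neg_sq, zero_mul, add_zero]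

variable [DecidableEq R]

lemma orthonormal_chirp (hψ : ψ.IsPrimitive) (a : R) : Orthonormal ℂ (chirp ψ a) := by
  rw [orthonormal_iff_ite]
  intro b b'
  simp_rw [inner_chirp, sub_self, zero_mul, zero_add, mul_comm (b' - b),
    AddChar.sum_mulShift _ hψ, sub_eq_zero, eq_comm (a := b')]
  split_ifs <;> simp

def chirpBasis (hψ : ψ.IsPrimitive) (a : R) : OrthonormalBasis R ℂ (EuclideanSpace ℂ R) :=
  .mk (orthonormal_chirp hψ a) <| ((orthonormal_chirp hψ a).linearIndependent
    |>.span_eq_top_of_card_eq_finrank' (finrank_euclideanSpace ..).symm).ge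

@[simp]
lemma coe_chirpBasis (hψ : ψ.IsPrimitive) (a : R) : ⇑(chirpBasis hψ a) = chirp ψ a :=
  OrthonormalBasis.coe_mk ..

lemma norm_inner_basisFun_chirp (p a b : R) :
    ‖⟪EuclideanSpace.basisFun R ℂ p, chirp ψ a b⟫_ℂ‖ = 1 / √(Fintype.card R) := by
  rw [EuclideanSpace.basisFun_apply, EuclideanSpace.inner_single_left, map_one, one_mul,
    norm_chirp_apply]

variable (R) in
def mutuallyUnbiasedBases (hψ : ψ.IsPrimitive) :
    Option R → OrthonormalBasis R ℂ (EuclideanSpace ℂ R)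
  | none => EuclideanSpace.basisFun R ℂ
  | some a => chirpBasis hψ a

lemma mutuallyUnbiasedBases_zero_apply_neg (hψ : ψ.IsPrimitive) (i : Option R) (x : R) :
    mutuallyUnbiasedBases R hψ i 0 (-x) = mutuallyUnbiasedBases R hψ i 0 x := by
  cases i with
  | none => simp [mutuallyUnbiasedBases]
  | some a => simpa [mutuallyUnbiasedBases] using chirp_zero_apply_neg a x

end Chirp

section Field

variable {F : Type*} [Field F] [Fintype F] [DecidableEq F] {ψ : AddChar F ℂ}

lemma norm_inner_chirp_of_ne (hψ : ψ.IsPrimitive) (h2 : (2 : F) ≠ 0) {a a' : F} (h : a ≠ a')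
    (b b' : F) : ‖⟪chirp ψ a b, chirp ψ a' b'⟫_ℂ‖ = 1 / √(Fintype.card F) := by
  rw [inner_chirp, norm_mul,
    AddChar.norm_sum_quadratic_eq_sqrt_card hψ h2 (sub_ne_zero.2 h.symm), norm_inv,
    Complex.norm_natCast]
  have : 0 < √(Fintype.card F) := Real.sqrt_pos.2 (Nat.cast_pos.2 Fintype.card_pos)
  field_simp
  exact Real.sq_sqrt (Nat.cast_nonneg _)

theorem norm_inner_mutuallyUnbiasedBases (hψ : ψ.IsPrimitive) (h2 : (2 : F) ≠ 0)
    {i j : Option F} (hij : i ≠ j) (p q : F) :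
    ‖⟪mutuallyUnbiasedBases F hψ i p, mutuallyUnbiasedBases F hψ j q⟫_ℂ‖ =
      1 / √(Fintype.card F) := by
  rcases i with _ | a <;> rcases j with _ | a' <;>
    simp only [mutuallyUnbiasedBases, coe_chirpBasis]
  · exact absurd rfl hij
  · exact norm_inner_basisFun_chirp p a' q
  · rw [norm_inner_symm]; exact norm_inner_basisFun_chirp q a p
  · exact norm_inner_chirp_of_ne hψ h2 (fun h ↦ hij (congrArg some h)) p q

end Field

section Ternary

open EuclideanSpace

def evenLine : Submodule ℂ (EuclideanSpace ℂ (ZMod 3)) :=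
  Submodule.span ℂ (Set.range ![single 0 1, single 1 1 + single 2 1])

lemma finrank_evenLine : Module.finrank ℂ evenLine = 2 := by
  have hindep : LinearIndependent ℂ ![(single 0 1 : EuclideanSpace ℂ (ZMod 3)),
      single 1 1 + single 2 1] := by
    rw [LinearIndependent.pair_iff]
    intro s t hst
    exact ⟨by simpa +decide using congr($hst 0), by simpa +decide using congr($hst 1)⟩
  rw [evenLine, finrank_span_eq_card hindep, Fintype.card_fin]

lemma mem_evenLine_of_apply_neg {x : EuclideanSpace ℂ (ZMod 3)} (hx : ∀ k, x (-k) = x k) :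
    x ∈ evenLine := by
  have hdecomp : x = x 0 • single 0 1 + x 1 • (single 1 1 + single 2 1) := by
    ext k
    obtain rfl | rfl | rfl : k = 0 ∨ k = 1 ∨ k = 2 := by revert k; decide
    · simp +decide
    · simp +decide
    · simp +decide
      exact hx 1
  rw [hdecomp]
  exact add_mem (Submodule.smul_mem _ _ (Submodule.subset_span ⟨0, rfl⟩))
    (Submodule.smul_mem _ _ (Submodule.subset_span ⟨1, rfl⟩))

end Ternary

end

/-- There exist four pairwise mutually unbiased orthonormal bases of `ℂ³`, together
with a choice of one vector from each basis, such that the four chosen vectors lie in a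
common 2-dimensional complex linear subspace and have pairwise Hermitian inner products
of absolute value `1/√3`. -/
theorem exists_MUBs_with_tetrahedron_on_common_line :
    ∃ (B : Fin 4 → OrthonormalBasis (Fin 3) ℂ (EuclideanSpace ℂ (Fin 3)))
      (i : Fin 4 → Fin 3),
      (∀ k l : Fin 4, k ≠ l → ∀ p q : Fin 3,
        ‖⟪B k p, B l q⟫_ℂ‖ = 1 / Real.sqrt 3) ∧
      (∃ W : Submodule ℂ (EuclideanSpace ℂ (Fin 3)),
        Module.finrank ℂ W = 2 ∧ ∀ k : Fin 4, B k (i k) ∈ W) ∧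
      (∀ k l : Fin 4, k ≠ l → ‖⟪B k (i k), B l (i l)⟫_ℂ‖ = 1 / Real.sqrt 3) := by
  have hψ := ZMod.isPrimitive_stdAddChar 3
  have h2 : (2 : ZMod 3) ≠ 0 := by decide
  -- `ZMod 3` is by definition `Fin 3`, so these bases already live in `EuclideanSpace ℂ (Fin 3)`.
  let B k := mutuallyUnbiasedBases (ZMod 3) hψ (finSuccEquiv 3 k)
  have hB : ∀ k l : Fin 4, k ≠ l → ∀ p q : Fin 3, ‖⟪B k p, B l q⟫_ℂ‖ = 1 / √3 :=
    fun k l hkl p q ↦ by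
      simpa using norm_inner_mutuallyUnbiasedBases hψ h2 ((finSuccEquiv 3).injective.ne hkl) p q
  refine ⟨B, fun _ ↦ 0, hB, ⟨evenLine, finrank_evenLine, fun k ↦ ?_⟩,
    fun k l hkl ↦ hB k l hkl 0 0⟩
  exact mem_evenLine_of_apply_neg (mutuallyUnbiasedBases_zero_apply_neg hψ _)
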